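/- Let a, x ∈ ℝ with x ≠ a. For every t > 0, ∫₀^t (|a−x|/s^{3/2}) φ((a−x)/√s) ds = 2·(1 − Φ(|a−x|/√t)). (This is the Bachelier–Lévy formula for the distribution function of the first passage time of Brownian motion through the constant level a, i.e. the case b = 0.) -/

import Mathlib

/-!
With `c = |a - x| > 0`, the function `F s = 2 (1 - Φ(c / √s))` is an antiderivative of the
first-passage density `c s^{-3/2} φ(c / √s)` on `(0, ∞)` (chain rule, with
`d/ds (c / √s) = -c / (2 s^{3/2})`), and `F s → 2 (1 - Φ(∞)) = 0` as `s → 0⁺`. Since the density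
is nonnegative it is integrable on `(0, t)`, and the fundamental theorem of calculus gives the
integral as `F t - 0`.
-/

open Real MeasureTheory Set Filter

/-- Standard Gaussian density φ(z) = (1/√(2π)) e^{−z²/2}. -/
noncomputable def gaussPdf (z : ℝ) : ℝ := (1 / Real.sqrt (2 * π)) * Real.exp (-z ^ 2 / 2)

/-- Standard Gaussian distribution function Φ(y) = ∫_{−∞}^y φ(z) dz. -/
noncomputable def gaussCdf (y : ℝ) : ℝ := ∫ z in Set.Iio y, gaussPdf z

/-- ψ_t(u) = (e^{−b²u/2}/(π√(u(t−u)))) · [ e^{−b²(t−u)/2}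
      + (b/2)·√(2π(t−u)) · (2Φ(b√(t−u)) − 1) ]. -/
noncomputable def psi (b t u : ℝ) : ℝ :=
  (Real.exp (-b ^ 2 * u / 2) / (π * Real.sqrt (u * (t - u)))) *
    (Real.exp (-b ^ 2 * (t - u) / 2) +
      (b / 2) * Real.sqrt (2 * π * (t - u)) *
        (2 * gaussCdf (b * Real.sqrt (t - u)) - 1))

/-- Inverse Gaussian first-passage density f_{τ₁}(t) = (|a−x|/t^{3/2}) φ((a+bt−x)/√t). -/
noncomputable def invGaussPdf (a x b t : ℝ) : ℝ :=
  (|a - x| / t ^ ((3 : ℝ) / 2)) * gaussPdf ((a + b * t - x) / Real.sqrt t)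

open Topology

namespace intervalIntegral

theorem intervalIntegrable_deriv_of_nonneg_of_tendsto {g g' : ℝ → ℝ} {a b ga gb : ℝ}
    (hab : a < b) (hderiv : ∀ x ∈ Ioo a b, HasDerivAt g (g' x) x)
    (hpos : ∀ x ∈ Ioo a b, 0 ≤ g' x)
    (ha : Tendsto g (𝓝[>] a) (𝓝 ga)) (hb : Tendsto g (𝓝[<] b) (𝓝 gb)) :
    IntervalIntegrable g' volume a b := by
  set G : ℝ → ℝ := Function.update (Function.update g a ga) b gb
  have hGderiv : ∀ x ∈ Ioo a b, HasDerivAt G (g' x) x := by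
    refine fun x hx => (hderiv x hx).congr_of_eventuallyEq ?_
    filter_upwards [Ioo_mem_nhds hx.1 hx.2] with y hy
    simp only [G, Function.update_of_ne hy.2.ne, Function.update_of_ne hy.1.ne']
  have hGcont : ContinuousOn G (Icc a b) := by
    rw [continuousOn_update_iff, continuousOn_update_iff, Icc_sdiff_right, Ico_sdiff_left]
    refine ⟨⟨fun z hz => (hderiv z hz).continuousAt.continuousWithinAt, ?_⟩, ?_⟩
    · exact fun _ => ha.mono_left (nhdsWithin_mono _ Ioo_subset_Ioi_self)
    · rintro -
      refine (hb.congr' ?_).mono_left (nhdsWithin_mono _ Ico_subset_Iio_self)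
      filter_upwards [Ioo_mem_nhdsLT hab] with z hz
      exact (Function.update_of_ne hz.1.ne' _ _).symm
  refine intervalIntegrable_deriv_of_nonneg (g := G) (by rwa [uIcc_of_le hab.le]) ?_ ?_ <;>
    simpa only [min_eq_left hab.le, max_eq_right hab.le]

end intervalIntegral

lemma gaussPdf_eq_gaussianPDFReal : gaussPdf = ProbabilityTheory.gaussianPDFReal 0 1 := by
  ext z
  simp [gaussPdf, ProbabilityTheory.gaussianPDFReal]

lemma gaussPdf_nonneg (z : ℝ) : 0 ≤ gaussPdf z := by
  unfold gaussPdf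
  positivity

lemma gaussPdf_abs (z : ℝ) : gaussPdf |z| = gaussPdf z := by
  simp only [gaussPdf, sq_abs]

lemma continuous_gaussPdf : Continuous gaussPdf := by
  unfold gaussPdf
  fun_prop

lemma integrable_gaussPdf : Integrable gaussPdf :=
  gaussPdf_eq_gaussianPDFReal ▸ ProbabilityTheory.integrable_gaussianPDFReal 0 1

lemma integral_gaussPdf : ∫ z, gaussPdf z = 1 :=
  gaussPdf_eq_gaussianPDFReal ▸ ProbabilityTheory.integral_gaussianPDFReal_eq_one 0 one_ne_zero

lemma gaussCdf_eq_add_intervalIntegral (y : ℝ) :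
    gaussCdf y = (∫ z in Iic 0, gaussPdf z) + ∫ z in (0 : ℝ)..y, gaussPdf z := by
  rw [gaussCdf, ← integral_Iic_eq_integral_Iio,
    ← intervalIntegral.integral_Iic_sub_Iic integrable_gaussPdf.integrableOn
      integrable_gaussPdf.integrableOn]
  ring

lemma hasDerivAt_gaussCdf (y : ℝ) : HasDerivAt gaussCdf (gaussPdf y) y := by
  rw [show gaussCdf = _ from funext gaussCdf_eq_add_intervalIntegral]
  exact (intervalIntegral.integral_hasDerivAt_right integrable_gaussPdf.intervalIntegrable
    (continuous_gaussPdf.stronglyMeasurableAtFilter _ _)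
    continuous_gaussPdf.continuousAt).const_add _

lemma tendsto_gaussCdf_atTop : Tendsto gaussCdf atTop (𝓝 1) := by
  rw [show gaussCdf = _ from funext gaussCdf_eq_add_intervalIntegral, ← integral_gaussPdf,
    ← intervalIntegral.integral_Iic_add_Ioi integrable_gaussPdf.integrableOn
      integrable_gaussPdf.integrableOn]
  exact (intervalIntegral_tendsto_integral_Ioi 0 integrable_gaussPdf.integrableOn
    tendsto_id).const_add _

section FirstPassage

variable {c s : ℝ}

lemma hasDerivAt_div_sqrt (hs : 0 < s) :
    HasDerivAt (fun u => c / √u) (-(c / (2 * s ^ ((3 : ℝ) / 2)))) s := by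
  have hsqrt : √s ≠ 0 := (sqrt_pos.mpr hs).ne'
  have hpow : s ^ ((3 : ℝ) / 2) = s * √s := by
    rw [sqrt_eq_rpow, show (3 : ℝ) / 2 = 1 + 1 / 2 by norm_num, rpow_add hs, rpow_one]
  refine ((hasDerivAt_const s c).div (hasDerivAt_sqrt hs.ne') hsqrt).congr_deriv ?_
  rw [hpow, sq_sqrt hs.le]
  field_simp
  ring

lemma tendsto_div_sqrt_nhdsGT_zero (hc : 0 < c) :
    Tendsto (fun u => c / √u) (𝓝[>] 0) atTop := by
  refine ((tendsto_rpow_neg_nhdsGT_zero (y := -(1 / 2)) (by norm_num)).const_mul_atTop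
    hc).congr' ?_
  filter_upwards [self_mem_nhdsWithin] with u hu
  rw [rpow_neg hu.out.le, ← sqrt_eq_rpow, div_eq_mul_inv]

noncomputable def firstPassageCdf (c s : ℝ) : ℝ := 2 * (1 - gaussCdf (c / √s))

lemma hasDerivAt_firstPassageCdf (hs : 0 < s) :
    HasDerivAt (firstPassageCdf c) (c / s ^ ((3 : ℝ) / 2) * gaussPdf (c / √s)) s := by
  refine ((((hasDerivAt_gaussCdf (c / √s)).comp s
    (hasDerivAt_div_sqrt hs)).const_sub 1).const_mul 2).congr_deriv ?_
  ring

lemma tendsto_firstPassageCdf_nhdsGT_zero (hc : 0 < c) :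
    Tendsto (firstPassageCdf c) (𝓝[>] 0) (𝓝 0) := by
  have h := ((tendsto_gaussCdf_atTop.comp (tendsto_div_sqrt_nhdsGT_zero hc)).const_sub 1).const_mul 2
  rwa [sub_self, mul_zero] at h

theorem integral_firstPassageDensity (hc : 0 < c) {t : ℝ} (ht : 0 < t) :
    ∫ s in (0 : ℝ)..t, c / s ^ ((3 : ℝ) / 2) * gaussPdf (c / √s) = firstPassageCdf c t := by
  have hderiv : ∀ s ∈ Ioo 0 t, HasDerivAt (firstPassageCdf c)
      (c / s ^ ((3 : ℝ) / 2) * gaussPdf (c / √s)) s :=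
    fun s hs => hasDerivAt_firstPassageCdf hs.1
  have hpos : ∀ s ∈ Ioo 0 t, 0 ≤ c / s ^ ((3 : ℝ) / 2) * gaussPdf (c / √s) :=
    fun s hs => mul_nonneg (div_nonneg hc.le (rpow_nonneg hs.1.le _)) (gaussPdf_nonneg _)
  have h0 := tendsto_firstPassageCdf_nhdsGT_zero hc
  have ht' : Tendsto (firstPassageCdf c) (𝓝[<] t) (𝓝 (firstPassageCdf c t)) :=
    (hasDerivAt_firstPassageCdf ht).continuousAt.tendsto.mono_left nhdsWithin_le_nhds
  have hint :=
    intervalIntegral.intervalIntegrable_deriv_of_nonneg_of_tendsto ht hderiv hpos h0 ht'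
  rw [intervalIntegral.integral_eq_sub_of_hasDerivAt_of_tendsto ht hderiv hint h0 ht', sub_zero]

end FirstPassage

theorem stmt10 (a x : ℝ) (hax : x ≠ a) (t : ℝ) (ht : 0 < t) :
    ∫ s in (0 : ℝ)..t, (|a - x| / s ^ ((3 : ℝ) / 2)) * gaussPdf ((a - x) / Real.sqrt s)
      = 2 * (1 - gaussCdf (|a - x| / Real.sqrt t)) := by
  have hc : 0 < |a - x| := abs_pos.mpr (sub_ne_zero.mpr hax.symm)
  have hpdf : ∀ s, gaussPdf ((a - x) / √s) = gaussPdf (|a - x| / √s) := fun s => by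
    rw [← gaussPdf_abs, abs_div, abs_of_nonneg (sqrt_nonneg s)]
  simp only [hpdf]
  exact integral_firstPassageDensity hc ht
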